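/- Let γ : I → 𝕃⁴ be a time-like curve parametrized by proper time with a Bishop frame (T,B₁,B₂,B₃) with coefficient functions b₁,b₂,b₃. (i) For every Bishop frame (T,B̂₁,B̂₂,B̂₃) of γ with coefficient functions b̂₁,b̂₂,b̂₃, there exists a constant matrix Q = (q_{ij}) ∈ O(3) such that B̂ᵢ = Σⱼ q_{ij}Bⱼ and b̂ᵢ = Σⱼ q_{ij}bⱼ for i = 1,2,3. (ii) Conversely, for every constant Q = (q_{ij}) ∈ O(3), the maps B̂ᵢ := Σⱼ q_{ij}Bⱼ together with T form a Bishop frame of γ with coefficient functions b̂ᵢ = Σⱼ q_{ij}bⱼ. -/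

import Mathlib

open Set Real

noncomputable section

/-- The Minkowski form on `ℝ⁴ = 𝕃⁴`: `⟨x,y⟩ = -x₀y₀ + x₁y₁ + x₂y₂ + x₃y₃`. -/
def mink (x y : Fin 4 → ℝ) : ℝ :=
  -(x 0 * y 0) + x 1 * y 1 + x 2 * y 2 + x 3 * y 3

/-- `(T, Z₁, Z₂, Z₃)` is an orthonormal frame along a time-like curve with tangent `T`:
the `Zᵢ` are smooth on `I`, pairwise orthonormal (space-like) and orthogonal to `T`. -/
def OrthFrame (I : Set ℝ) (T Z₁ Z₂ Z₃ : ℝ → Fin 4 → ℝ) : Prop :=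
  ContDiffOn ℝ (⊤ : ℕ∞) Z₁ I ∧ ContDiffOn ℝ (⊤ : ℕ∞) Z₂ I ∧ ContDiffOn ℝ (⊤ : ℕ∞) Z₃ I ∧
  ∀ s ∈ I,
    mink (Z₁ s) (Z₁ s) = 1 ∧ mink (Z₂ s) (Z₂ s) = 1 ∧ mink (Z₃ s) (Z₃ s) = 1 ∧
    mink (Z₁ s) (Z₂ s) = 0 ∧ mink (Z₁ s) (Z₃ s) = 0 ∧ mink (Z₂ s) (Z₃ s) = 0 ∧
    mink (T s) (Z₁ s) = 0 ∧ mink (T s) (Z₂ s) = 0 ∧ mink (T s) (Z₃ s) = 0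

/-- `γ` is a smooth time-like curve parametrized by proper time on `I`. -/
def ProperTime (I : Set ℝ) (γ : ℝ → Fin 4 → ℝ) : Prop :=
  ContDiffOn ℝ (⊤ : ℕ∞) γ I ∧ ∀ s ∈ I, mink (deriv γ s) (deriv γ s) = -1

/-- Three smooth real functions on `I`. -/
def Smooth3 (I : Set ℝ) (x₁ x₂ x₃ : ℝ → ℝ) : Prop :=
  ContDiffOn ℝ (⊤ : ℕ∞) x₁ I ∧ ContDiffOn ℝ (⊤ : ℕ∞) x₂ I ∧ ContDiffOn ℝ (⊤ : ℕ∞) x₃ I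

/-- `γ` admits a generalized Bishop frame of type B. -/
def AdmitsB (I : Set ℝ) (γ : ℝ → Fin 4 → ℝ) : Prop :=
  ∃ (Z₁ Z₂ Z₃ : ℝ → Fin 4 → ℝ) (x₁ x₂ x₃ : ℝ → ℝ),
    OrthFrame I (deriv γ) Z₁ Z₂ Z₃ ∧ Smooth3 I x₁ x₂ x₃ ∧
    ∀ s ∈ I,
      deriv (deriv γ) s = x₁ s • Z₁ s + x₂ s • Z₂ s + x₃ s • Z₃ s ∧
      deriv Z₁ s = x₁ s • deriv γ s ∧
      deriv Z₂ s = x₂ s • deriv γ s ∧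
      deriv Z₃ s = x₃ s • deriv γ s

/-- `γ` admits a generalized Bishop frame of type C. -/
def AdmitsC (I : Set ℝ) (γ : ℝ → Fin 4 → ℝ) : Prop :=
  ∃ (Z₁ Z₂ Z₃ : ℝ → Fin 4 → ℝ) (x₁ x₂ x₃ : ℝ → ℝ),
    OrthFrame I (deriv γ) Z₁ Z₂ Z₃ ∧ Smooth3 I x₁ x₂ x₃ ∧
    ∀ s ∈ I,
      deriv (deriv γ) s = x₁ s • Z₁ s + x₂ s • Z₂ s ∧
      deriv Z₁ s = x₁ s • deriv γ s + x₃ s • Z₃ s ∧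
      deriv Z₂ s = x₂ s • deriv γ s ∧
      deriv Z₃ s = (-(x₃ s)) • Z₁ s

/-- `γ` admits a generalized Bishop frame of type D. -/
def AdmitsD (I : Set ℝ) (γ : ℝ → Fin 4 → ℝ) : Prop :=
  ∃ (Z₁ Z₂ Z₃ : ℝ → Fin 4 → ℝ) (x₁ x₂ x₃ : ℝ → ℝ),
    OrthFrame I (deriv γ) Z₁ Z₂ Z₃ ∧ Smooth3 I x₁ x₂ x₃ ∧
    ∀ s ∈ I,
      deriv (deriv γ) s = x₁ s • Z₁ s ∧
      deriv Z₁ s = x₁ s • deriv γ s + x₂ s • Z₂ s + x₃ s • Z₃ s ∧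
      deriv Z₂ s = (-(x₂ s)) • Z₁ s ∧
      deriv Z₃ s = (-(x₃ s)) • Z₁ s

/-- `γ` admits a generalized Bishop frame of type F. -/
def AdmitsF (I : Set ℝ) (γ : ℝ → Fin 4 → ℝ) : Prop :=
  ∃ (Z₁ Z₂ Z₃ : ℝ → Fin 4 → ℝ) (x₁ x₂ x₃ : ℝ → ℝ),
    OrthFrame I (deriv γ) Z₁ Z₂ Z₃ ∧ Smooth3 I x₁ x₂ x₃ ∧
    ∀ s ∈ I,
      deriv (deriv γ) s = x₁ s • Z₁ s ∧
      deriv Z₁ s = x₁ s • deriv γ s + x₂ s • Z₂ s ∧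
      deriv Z₂ s = (-(x₂ s)) • Z₁ s + x₃ s • Z₃ s ∧
      deriv Z₃ s = (-(x₃ s)) • Z₂ s

/-- A Bishop frame (indexed form): `(T, B 0, B 1, B 2)` is an orthonormal frame along `γ`
with coefficient functions `b i`, i.e. `T' = Σᵢ bᵢ Bᵢ` and `Bᵢ' = bᵢ T`. -/
def IsBishopFrame (I : Set ℝ) (γ : ℝ → Fin 4 → ℝ)
    (B : Fin 3 → ℝ → Fin 4 → ℝ) (b : Fin 3 → ℝ → ℝ) : Prop :=
  (∀ i, ContDiffOn ℝ (⊤ : ℕ∞) (B i) I) ∧ (∀ i, ContDiffOn ℝ (⊤ : ℕ∞) (b i) I) ∧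
  (∀ s ∈ I, ∀ i j, mink (B i s) (B j s) = if i = j then 1 else 0) ∧
  (∀ s ∈ I, ∀ i, mink (deriv γ s) (B i s) = 0) ∧
  (∀ s ∈ I, deriv (deriv γ) s = ∑ i, b i s • B i s) ∧
  (∀ s ∈ I, ∀ i, deriv (B i) s = b i s • deriv γ s)

/-! Differentiating `⟨B̂ᵢ, Bⱼ⟩` gives `b̂ᵢ ⟨T, Bⱼ⟩ + bⱼ ⟨B̂ᵢ, T⟩ = 0`, so `Qᵢⱼ := ⟨B̂ᵢ, Bⱼ⟩` is
constant on the interval. As `(T, B₁, B₂, B₃)` is a Minkowski-orthonormal basis of `𝕃⁴` and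
`B̂ᵢ ⊥ T`, we get `B̂ᵢ = Σⱼ Qᵢⱼ Bⱼ`; orthonormality of the `B̂ᵢ` then reads `Q Qᵀ = 1`, and pairing
`T' = Σ bⱼ Bⱼ = Σ b̂ₖ B̂ₖ` with `B̂ᵢ` gives `b̂ᵢ = Σⱼ Qᵢⱼ bⱼ`. Conversely, all the defining
identities of a Bishop frame are linear in the `Bᵢ`, and `QᵀQ = 1` preserves their Gram matrix. -/

open Matrix

theorem LinearMap.BilinForm.eq_zero_of_iIsOrtho_of_card_eq_finrank {K V ι : Type*} [Field K]
    [AddCommGroup V] [Module K V] [FiniteDimensional K V] [Fintype ι]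
    {B : LinearMap.BilinForm K V} (hB : B.SeparatingRight) {v : ι → V} (hv₁ : B.iIsOrtho v)
    (hv₂ : ∀ i, B (v i) (v i) ≠ 0) (hcard : Fintype.card ι = Module.finrank K V) {x : V}
    (hx : ∀ i, B (v i) x = 0) : x = 0 := by
  have hspan := (linearIndependent_of_iIsOrtho hv₁ hv₂).span_eq_top_of_card_eq_finrank' hcard
  have hflip : B.flip x = 0 := LinearMap.ext_on_range hspan fun i => by simpa using hx i
  exact hB x fun y => by simpa using LinearMap.congr_fun hflip y

theorem Matrix.sum_smul_sum_smul_of_transpose_mul_self {R M n : Type*} [CommSemiring R]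
    [AddCommMonoid M] [Module R M] [Fintype n] [DecidableEq n] {Q : Matrix n n R} (hQ : Qᵀ * Q = 1)
    (x : n → R) (v : n → M) :
    ∑ i, (∑ j, Q i j * x j) • ∑ l, Q i l • v l = ∑ l, x l • v l := by
  simp_rw [Finset.smul_sum, smul_smul]
  rw [Finset.sum_comm]
  refine Finset.sum_congr rfl fun l _ => ?_
  rw [← Finset.sum_smul]
  have hx : (Q *ᵥ x) ᵥ* Q = x := by rw [← mulVec_transpose, mulVec_mulVec, hQ, one_mulVec]
  exact congrArg (· • v l) (congrFun hx l)

lemma mink_comm (x y : Fin 4 → ℝ) : mink x y = mink y x := by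
  simp only [mink]; ring

def minkForm : LinearMap.BilinForm ℝ (Fin 4 → ℝ) :=
  LinearMap.mk₂ ℝ mink (fun _ _ _ => by simp only [mink, Pi.add_apply]; ring)
    (fun _ _ _ => by simp only [mink, Pi.smul_apply, smul_eq_mul]; ring)
    (fun _ _ _ => by simp only [mink, Pi.add_apply]; ring)
    (fun _ _ _ => by simp only [mink, Pi.smul_apply, smul_eq_mul]; ring)

@[simp] lemma minkForm_apply (x y : Fin 4 → ℝ) : minkForm x y = mink x y := rfl

lemma minkForm_separatingRight : minkForm.SeparatingRight := by
  intro x hx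
  funext k
  have := hx (Pi.single k 1)
  fin_cases k <;> simpa [mink] using this

lemma mink_smul_left (c : ℝ) (x y : Fin 4 → ℝ) : mink (c • x) y = c * mink x y :=
  minkForm.map_smul₂ c x y

lemma mink_smul_right (c : ℝ) (x y : Fin 4 → ℝ) : mink x (c • y) = c * mink x y :=
  (minkForm x).map_smul c y

lemma mink_sub_right (x y z : Fin 4 → ℝ) : mink x (y - z) = mink x y - mink x z :=
  (minkForm x).map_sub y z

lemma mink_sum_smul_left {ι : Type*} [Fintype ι] (c : ι → ℝ) (v : ι → Fin 4 → ℝ)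
    (y : Fin 4 → ℝ) : mink (∑ j, c j • v j) y = ∑ j, c j * mink (v j) y := by
  simp [← minkForm_apply, map_sum, LinearMap.sum_apply]

lemma mink_sum_smul_right {ι : Type*} [Fintype ι] (x : Fin 4 → ℝ) (c : ι → ℝ)
    (v : ι → Fin 4 → ℝ) : mink x (∑ j, c j • v j) = ∑ j, c j * mink x (v j) := by
  simp [← minkForm_apply, map_sum]

theorem HasDerivAt.mink {f g : ℝ → Fin 4 → ℝ} {f' g' : Fin 4 → ℝ} {s : ℝ}
    (hf : HasDerivAt f f' s) (hg : HasDerivAt g g' s) :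
    HasDerivAt (fun t => mink (f t) (g t)) (mink f' (g s) + mink (f s) g') s := by
  have hf' := hasDerivAt_pi.1 hf
  have hg' := hasDerivAt_pi.1 hg
  have h : HasDerivAt (fun t => -(f t 0 * g t 0) + f t 1 * g t 1 + f t 2 * g t 2 + f t 3 * g t 3)
      (-(f' 0 * g s 0 + f s 0 * g' 0) + (f' 1 * g s 1 + f s 1 * g' 1)
        + (f' 2 * g s 2 + f s 2 * g' 2) + (f' 3 * g s 3 + f s 3 * g' 3)) s :=
    ((((hf' 0).mul (hg' 0)).neg.add ((hf' 1).mul (hg' 1))).add ((hf' 2).mul (hg' 2))).add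
      ((hf' 3).mul (hg' 3))
  convert h using 1
  · rfl
  · simp only [_root_.mink]; ring

section Orthonormal

variable {E : Fin 3 → Fin 4 → ℝ} (hE : ∀ i j, mink (E i) (E j) = if i = j then 1 else 0)
include hE

lemma mink_apply_sum_smul_of_orthonormal (c : Fin 3 → ℝ) (k : Fin 3) :
    mink (E k) (∑ j, c j • E j) = c k := by
  simp [mink_sum_smul_right, hE]

lemma mink_matrix_combination_of_orthonormal (Q : Matrix (Fin 3) (Fin 3) ℝ) (i k : Fin 3) :
    mink (∑ j, Q i j • E j) (∑ j, Q k j • E j) = (Q * Qᵀ) i k := by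
  simp [mink_sum_smul_left, mink_apply_sum_smul_of_orthonormal hE, Matrix.mul_apply]

end Orthonormal

structure IsLorentzFrame (T : Fin 4 → ℝ) (E : Fin 3 → Fin 4 → ℝ) : Prop where
  tangent_self : mink T T = -1
  orthonormal : ∀ i j, mink (E i) (E j) = if i = j then 1 else 0
  tangent_orth : ∀ i, mink T (E i) = 0

namespace IsLorentzFrame

variable {T : Fin 4 → ℝ} {E : Fin 3 → Fin 4 → ℝ}

theorem eq_zero_of_mink_eq_zero (h : IsLorentzFrame T E) {v : Fin 4 → ℝ}
    (hT : mink T v = 0) (hE : ∀ i, mink (E i) v = 0) : v = 0 := by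
  let e : Option (Fin 3) → Fin 4 → ℝ := fun o => o.elim T E
  refine LinearMap.BilinForm.eq_zero_of_iIsOrtho_of_card_eq_finrank minkForm_separatingRight
    (v := e) ?_ ?_ ?_ ?_
  · rintro (_ | i) (_ | j) hij
    · exact absurd rfl hij
    · exact h.tangent_orth j
    · exact (mink_comm _ _).trans (h.tangent_orth i)
    · have hij : i ≠ j := fun h => hij (congrArg some h)
      simpa [Function.onFun, e, hij] using h.orthonormal i j
  · rintro (_ | i)
    · simp [e, h.tangent_self]
    · simp [e, h.orthonormal]
  · simp
  · rintro (_ | i)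
    exacts [hT, hE i]

theorem eq_sum_mink_smul (h : IsLorentzFrame T E) {v : Fin 4 → ℝ} (hv : mink T v = 0) :
    v = ∑ j, mink v (E j) • E j := by
  refine sub_eq_zero.mp (h.eq_zero_of_mink_eq_zero ?_ fun i => ?_)
  · simp [mink_sub_right, mink_sum_smul_right, hv, h.tangent_orth]
  · rw [mink_sub_right, mink_apply_sum_smul_of_orthonormal h.orthonormal, mink_comm, sub_self]

end IsLorentzFrame

namespace IsBishopFrame

variable {I : Set ℝ} {γ : ℝ → Fin 4 → ℝ} {B : Fin 3 → ℝ → Fin 4 → ℝ} {b : Fin 3 → ℝ → ℝ}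

theorem isLorentzFrame (hB : IsBishopFrame I γ B b) (hγ : ProperTime I γ) {s : ℝ} (hs : s ∈ I) :
    IsLorentzFrame (deriv γ s) (fun i => B i s) :=
  ⟨hγ.2 s hs, hB.2.2.1 s hs, hB.2.2.2.1 s hs⟩

theorem hasDerivAt (hB : IsBishopFrame I γ B b) (hI : IsOpen I) {s : ℝ} (hs : s ∈ I)
    (i : Fin 3) : HasDerivAt (B i) (b i s • deriv γ s) s := by
  have hd := ((hB.1 i).differentiableOn (by simp)).differentiableAt (hI.mem_nhds hs)
  simpa only [hB.2.2.2.2.2 s hs i] using hd.hasDerivAt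

theorem mink_eq_of_mem {B' : Fin 3 → ℝ → Fin 4 → ℝ} {b' : Fin 3 → ℝ → ℝ}
    (hB : IsBishopFrame I γ B b) (hB' : IsBishopFrame I γ B' b') (hI : IsOpen I)
    (hIc : I.OrdConnected) (i j : Fin 3) {s t : ℝ} (hs : s ∈ I) (ht : t ∈ I) :
    mink (B' i s) (B j s) = mink (B' i t) (B j t) := by
  have hderiv : ∀ u ∈ I, HasDerivAt (fun u => mink (B' i u) (B j u)) 0 u := fun u hu => by
    simpa [mink_smul_left, mink_smul_right, mink_comm (B' i u), hB.2.2.2.1 u hu,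
      hB'.2.2.2.1 u hu] using (hB'.hasDerivAt hI hu i).mink (hB.hasDerivAt hI hu j)
  exact hI.is_const_of_deriv_eq_zero hIc.isPreconnected
    (fun u hu => (hderiv u hu).differentiableAt.differentiableWithinAt)
    (fun u hu => (hderiv u hu).deriv) hs ht

theorem exists_orthogonal_matrix {B' : Fin 3 → ℝ → Fin 4 → ℝ} {b' : Fin 3 → ℝ → ℝ}
    (hB : IsBishopFrame I γ B b) (hB' : IsBishopFrame I γ B' b') (hγ : ProperTime I γ)
    (hI : IsOpen I) (hIc : I.OrdConnected) :
    ∃ Q : Matrix (Fin 3) (Fin 3) ℝ, Qᵀ * Q = 1 ∧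
      ∀ s ∈ I, ∀ i, B' i s = ∑ j, Q i j • B j s ∧ b' i s = ∑ j, Q i j * b j s := by
  rcases I.eq_empty_or_nonempty with rfl | ⟨s₀, hs₀⟩
  · exact ⟨1, by simp, by simp⟩
  let Q : Matrix (Fin 3) (Fin 3) ℝ := .of fun i j => mink (B' i s₀) (B j s₀)
  have hB'_eq : ∀ s ∈ I, ∀ i, B' i s = ∑ j, Q i j • B j s := fun s hs i => by
    simpa only [Q, Matrix.of_apply, hB.mink_eq_of_mem hB' hI hIc i _ hs hs₀] using
      (hB.isLorentzFrame hγ hs).eq_sum_mink_smul (hB'.2.2.2.1 s hs i)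
  have hQQ : Q * Qᵀ = 1 := by
    ext i k
    rw [← mink_matrix_combination_of_orthonormal (hB.2.2.1 s₀ hs₀), ← hB'_eq s₀ hs₀,
      ← hB'_eq s₀ hs₀, hB'.2.2.1 s₀ hs₀, Matrix.one_apply]
  refine ⟨Q, mul_eq_one_comm.mp hQQ, fun s hs i => ⟨hB'_eq s hs i, ?_⟩⟩
  calc b' i s = mink (B' i s) (deriv (deriv γ) s) := by
        rw [hB'.2.2.2.2.1 s hs, mink_apply_sum_smul_of_orthonormal (hB'.2.2.1 s hs)]
    _ = ∑ j, Q i j * b j s := by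
        rw [hB.2.2.2.2.1 s hs, hB'_eq s hs i, mink_sum_smul_left]
        simp [mink_apply_sum_smul_of_orthonormal (hB.2.2.1 s hs)]

theorem matrix_combination (hB : IsBishopFrame I γ B b) (hI : IsOpen I)
    {Q : Matrix (Fin 3) (Fin 3) ℝ} (hQ : Qᵀ * Q = 1) :
    IsBishopFrame I γ (fun i s => ∑ j, Q i j • B j s) (fun i s => ∑ j, Q i j * b j s) := by
  have hBd := fun s (hs : s ∈ I) => hB.hasDerivAt hI hs
  obtain ⟨hBs, hbs, hBo, hBT, hT', -⟩ := hB
  refine ⟨fun i => ContDiffOn.sum fun j _ => (hBs j).const_smul (Q i j),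
    fun i => ContDiffOn.sum fun j _ => contDiffOn_const.mul (hbs j),
    fun s hs i k => ?_, fun s hs i => ?_, fun s hs => ?_, fun s hs i => ?_⟩
  · rw [mink_matrix_combination_of_orthonormal (hBo s hs), mul_eq_one_comm.mp hQ,
      Matrix.one_apply]
  · simp [mink_sum_smul_right, hBT s hs]
  · rw [hT' s hs, Matrix.sum_smul_sum_smul_of_transpose_mul_self hQ]
  · refine (HasDerivAt.fun_sum fun j _ => (hBd s hs j).const_smul (Q i j)).deriv.trans ?_
    simp [Finset.sum_smul, smul_smul]

end IsBishopFrame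

/-- (i) any two Bishop frames of a time-like curve differ by a constant
matrix `Q ∈ O(3)`, which also relates the coefficient functions; (ii) conversely, every
constant `Q ∈ O(3)` transforms a Bishop frame into a Bishop frame. -/
theorem stmt_17 (I : Set ℝ) (hIopen : IsOpen I) (hIconn : I.OrdConnected)
    (γ : ℝ → Fin 4 → ℝ) (hγ : ProperTime I γ)
    (B : Fin 3 → ℝ → Fin 4 → ℝ) (b : Fin 3 → ℝ → ℝ)
    (hB : IsBishopFrame I γ B b) :
    (∀ (B' : Fin 3 → ℝ → Fin 4 → ℝ) (b' : Fin 3 → ℝ → ℝ),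
      IsBishopFrame I γ B' b' →
      ∃ Q : Matrix (Fin 3) (Fin 3) ℝ, Q.transpose * Q = 1 ∧
        ∀ s ∈ I, ∀ i, B' i s = ∑ j, Q i j • B j s ∧ b' i s = ∑ j, Q i j * b j s) ∧
    (∀ Q : Matrix (Fin 3) (Fin 3) ℝ, Q.transpose * Q = 1 →
      IsBishopFrame I γ (fun i s => ∑ j, Q i j • B j s) (fun i s => ∑ j, Q i j * b j s)) :=
  ⟨fun _ _ hB' => hB.exists_orthogonal_matrix hB' hγ hIopen hIconn,
    fun _ hQ => hB.matrix_combination hIopen hQ⟩
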